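/- arXiv:1907.01257 — 4 statements merged into one kernel-verified Lean document; each statement's English description precedes it below -/
import Mathlib

section
/- Let (X, →) be a deterministic transition system with final states being exactly the normal forms of a distinguished subset (final states have no successors). Let Q be a preorder on ℕ. If x ≃_Q y (equivalence up to Q), then x ≃_{Q ∩ Q^{-1}} y, where Q^{-1} is the converse of Q. Conversely, since Q ∩ Q^{-1} ⊆ Q, x ≃_{Q∩Q^{-1}} y implies x ≃_Q y. Hence in a deterministic system, equivalence up to Q coincides with equivalence up to the symmetric core Q ∩ Q^{-1}. -/
/-- `StepN r k x y`: a sequence of exactly `k` transitions from `x` to `y`. -/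
def StepN {X : Type*} (r : X → X → Prop) : ℕ → X → X → Prop
  | 0 => fun x y => x = y
  | n + 1 => fun x y => ∃ z, r x z ∧ StepN r n z y

/-- State refinement up to `Q`. -/
def Refines {X : Type*} (r : X → X → Prop) (F : Set X) (Q : ℕ → ℕ → Prop)
    (x y : X) : Prop :=
  ∀ k n, StepN r k x n → n ∈ F → ∃ h m, Q k h ∧ StepN r h y m ∧ m ∈ F


lemma stepN_unique {X : Type*} (r : X → X → Prop) (F : Set X)
    (hdet : ∀ x y y', r x y → r x y' → y = y')
    (hfinal : ∀ x ∈ F, ∀ y, ¬ r x y) :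
    ∀ k k' (x n n' : X), StepN r k x n → n ∈ F → StepN r k' x n' → n' ∈ F →
      k = k' ∧ n = n' := by
  intro k
  induction k with
  | zero =>
    intro k' x n n' hs hn hs' hn'
    cases hs
    cases k' with
    | zero => cases hs'; exact ⟨rfl, rfl⟩
    | succ m => obtain ⟨z, hz, _⟩ := hs'; exact absurd hz (hfinal _ hn _)
  | succ k ih =>
    intro k' x n n' hs hn hs' hn'
    obtain ⟨z, hz, hzs⟩ := hs
    cases k' with
    | zero => cases hs'; exact absurd hz (hfinal _ hn' _)
    | succ m =>
      obtain ⟨w, hw, hws⟩ := hs'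
      cases hdet _ _ _ hz hw
      obtain ⟨h1, h2⟩ := ih m z n n' hzs hn hws hn'
      exact ⟨by omega, h2⟩

/-- In a deterministic transition system whose final states have no successors,
equivalence up to a preorder `Q` coincides with equivalence up to the
symmetric core `Q ∩ Q⁻¹`. -/
theorem equiv_iff_equiv_symmetric_core {X : Type*} (r : X → X → Prop)
    (F : Set X)
    (hdet : ∀ x y y', r x y → r x y' → y = y')
    (hfinal : ∀ x ∈ F, ∀ y, ¬ r x y)
    (Q : ℕ → ℕ → Prop) (hrefl : Reflexive Q) (htrans : Transitive Q)
    (x y : X) :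
    (Refines r F Q x y ∧ Refines r F Q y x) ↔
      (Refines r F (fun a b => Q a b ∧ Q b a) x y ∧
        Refines r F (fun a b => Q a b ∧ Q b a) y x) := by
  constructor
  · rintro ⟨h1, h2⟩
    constructor
    · intro k n hs hn
      obtain ⟨h, m, hq, hsm, hm⟩ := h1 k n hs hn
      obtain ⟨k', m', hq', hsm', hm'⟩ := h2 h m hsm hm
      obtain ⟨hk, -⟩ := stepN_unique r F hdet hfinal k k' x n m' hs hn hsm' hm'
      exact ⟨h, m, ⟨hq, hk ▸ hq'⟩, hsm, hm⟩
    · intro k n hs hn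
      obtain ⟨h, m, hq, hsm, hm⟩ := h2 k n hs hn
      obtain ⟨k', m', hq', hsm', hm'⟩ := h1 h m hsm hm
      obtain ⟨hk, -⟩ := stepN_unique r F hdet hfinal k k' y n m' hs hn hsm' hm'
      exact ⟨h, m, ⟨hq, hk ▸ hq'⟩, hsm, hm⟩
  · rintro ⟨h1, h2⟩
    refine ⟨fun k n hs hn => ?_, fun k n hs hn => ?_⟩
    · obtain ⟨h, m, ⟨hq, -⟩, hsm, hm⟩ := h1 k n hs hn
      exact ⟨h, m, hq, hsm, hm⟩
    · obtain ⟨h, m, ⟨hq, -⟩, hsm, hm⟩ := h2 k n hs hn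
      exact ⟨h, m, hq, hsm, hm⟩
end

section
/- Let (X, →) be a deterministic transition system where final states and stuck states are normal forms, and let (Q, Q', Q'') be a reasonable triple of preorders on ℕ. Suppose R is a binary relation on X satisfying: (A) if x R y and x is final then y is final; (B) if x R y and x → x', then either (I) x' reduces to a stuck state, or (II) there exist states u, v and numbers k₁, k₂ with u (≼_{Q'} ∘ R ∘ ≼_{Q''}) v, (1+k₁) Q k₂, x' →^{k₁} u, and y →^{k₂} v. Then R implies refinement up to Q: x R y implies x ≼_Q y. -/
theorem StepN.comp {X : Type*} {r : X → X → Prop} :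
    ∀ {a b : ℕ} {x y z : X}, StepN r a x y → StepN r b y z → StepN r (a + b) x z := by
  intro a
  induction a with
  | zero => intro b x y z h1 h2; cases h1; simpa using h2
  | succ n ih =>
    intro b x y z h1 h2
    obtain ⟨w, hw, hrest⟩ := h1
    have e : n + 1 + b = (n + b) + 1 := by omega
    rw [e]
    exact ⟨w, hw, ih hrest h2⟩

theorem StepN.prefix {X : Type*} {r : X → X → Prop}
    (hdet : ∀ x y y', r x y → r x y' → y = y') :
    ∀ {j k : ℕ} {x u n : X}, StepN r j x u → StepN r k x n → (∀ z, ¬ r n z) →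
      j ≤ k ∧ StepN r (k - j) u n := by
  intro j
  induction j with
  | zero => intro k x u n h1 h2 _; cases h1; simpa using h2
  | succ m ih =>
    intro k x u n h1 h2 hn
    obtain ⟨z, hz, hrest⟩ := h1
    cases k with
    | zero => cases h2; exact absurd hz (hn z)
    | succ k' =>
      obtain ⟨z', hz', hrest'⟩ := h2
      cases hdet x z z' hz hz'
      obtain ⟨hle, hs⟩ := ih hrest hrest' hn
      exact ⟨Nat.succ_le_succ hle, by simpa using hs⟩

theorem rtg_stepN {X : Type*} {r : X → X → Prop} {x s : X}
    (h : Relation.ReflTransGen r x s) : ∃ j, StepN r j x s := by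
  induction h with
  | refl => exact ⟨0, rfl⟩
  | tail _ hstep ih =>
    obtain ⟨j, hj⟩ := ih
    exact ⟨j + 1, StepN.comp hj ⟨_, hstep, rfl⟩⟩

/-- A reasonable triple of relations on `ℕ`. -/
def Reasonable (Q Q' Q'' : ℕ → ℕ → Prop) : Prop :=
  (∀ k₁ k₂ k₁' k₂', Q k₁ k₂ → Q k₁' k₂' → Q (k₁ + k₁') (k₂ + k₂')) ∧
    (∀ a b, Q' a b → a ≥ b) ∧
    (∀ a b, Q' a b → Q'' a b) ∧
    (∀ a d, (∃ b c, Q' a b ∧ Q b c ∧ Q'' c d) → Q a d)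

/-- Soundness of `(Q,Q',Q'')`-simulations: in a deterministic transition system
where final states and stuck states are disjoint classes of normal forms, if
`(Q,Q',Q'')` is a reasonable triple of preorders and `R` is a
`(Q,Q',Q'')`-simulation, then `R` implies refinement up to `Q`. -/
theorem simulation_implies_refinement {X : Type*} (r : X → X → Prop)
    (F S : Set X)
    (hdet : ∀ x y y', r x y → r x y' → y = y')
    (hfinal : ∀ x ∈ F, ∀ y, ¬ r x y)
    (hstuck : ∀ x ∈ S, ∀ y, ¬ r x y)
    (hdisj : ∀ x, ¬(x ∈ F ∧ x ∈ S))
    (Q Q' Q'' : ℕ → ℕ → Prop)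
    (hQ : Reflexive Q ∧ Transitive Q)
    (hQ' : Reflexive Q' ∧ Transitive Q')
    (hQ'' : Reflexive Q'' ∧ Transitive Q'')
    (hreas : Reasonable Q Q' Q'')
    (R : X → X → Prop)
    (hA : ∀ x y, R x y → x ∈ F → y ∈ F)
    (hB : ∀ x y x', R x y → r x x' →
      (∃ s ∈ S, Relation.ReflTransGen r x' s) ∨
        (∃ u v k₁ k₂,
          (∃ a b, Refines r F Q' u a ∧ R a b ∧ Refines r F Q'' b v) ∧
          Q (1 + k₁) k₂ ∧ StepN r k₁ x' u ∧ StepN r k₂ y v)) :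
    ∀ x y, R x y → Refines r F Q x y := by
  have main : ∀ k, ∀ x y, R x y → ∀ n, StepN r k x n → n ∈ F →
      ∃ h m, Q k h ∧ StepN r h y m ∧ m ∈ F := by
    intro k
    induction k using Nat.strong_induction_on with
    | _ k ih =>
      intro x y hxy n hsteps hnF
      cases k with
      | zero =>
        cases hsteps
        exact ⟨0, y, hQ.1 0, rfl, hA x y hxy hnF⟩
      | succ kk =>
        obtain ⟨x', hx', hrest⟩ := hsteps
        have hn_nf : ∀ z, ¬ r n z := hfinal n hnF
        rcases hB x y x' hxy hx' with ⟨s, hsS, hrt⟩ |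
          ⟨u, v, k₁, k₂, ⟨a, b, hua, hab, hbv⟩, hQk, hxu, hyv⟩
        · exfalso
          obtain ⟨j, hj⟩ := rtg_stepN hrt
          obtain ⟨hle, hsn⟩ := StepN.prefix hdet hj hrest hn_nf
          cases hkj : kk - j with
          | zero =>
            rw [hkj] at hsn
            have : s = n := hsn
            exact hdisj n ⟨hnF, this ▸ hsS⟩
          | succ m =>
            rw [hkj] at hsn
            obtain ⟨z, hz, _⟩ := hsn
            exact hstuck s hsS z hz
        · obtain ⟨hk₁le, hun⟩ := StepN.prefix hdet hxu hrest hn_nf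
          obtain ⟨h₁, m₁, hQ'1, hsa, hm₁F⟩ := hua (kk - k₁) n hun hnF
          have hh₁ : h₁ ≤ kk - k₁ := hreas.2.1 _ _ hQ'1
          obtain ⟨h₂, m₂, hQ12, hsb, hm₂F⟩ :=
            ih h₁ (by omega) a b hab m₁ hsa hm₁F
          obtain ⟨h₃, m₃, hQ''23, hsv, hm₃F⟩ := hbv h₂ m₂ hsb hm₂F
          have hQ2 : Q (kk - k₁) h₃ := hreas.2.2.2 _ _ ⟨h₁, h₂, hQ'1, hQ12, hQ''23⟩
          have hQadd := hreas.1 _ _ _ _ hQk hQ2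
          have e : (1 + k₁) + (kk - k₁) = kk + 1 := by omega
          rw [e] at hQadd
          exact ⟨k₂ + h₃, m₃, hQadd, StepN.comp hyv hsv, hm₃F⟩
  exact fun x y hxy k n hs hn => main k x y hxy n hs hn
end

section
/- Let (X, →) be a deterministic transition system with final and stuck states as disjoint classes of normal forms, and Q' a relation on ℕ such that (k₀+k₁) Q' (k₀+k₂) implies k₁ Q' k₂ for all k₀,k₁,k₂. Suppose x₁, x₂, y₁, y₂ ∈ X satisfy: y₁ →^k x₁ and y₂ →^k x₂ for the same k ∈ ℕ, and y₁ ≼_{Q'} y₂. Then x₁ ≼_{Q'} x₂. -/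
lemma StepN.trans {X : Type*} {r : X → X → Prop} :
    ∀ {k h : ℕ} {x y z : X}, StepN r k x y → StepN r h y z → StepN r (k + h) x z := by
  intro k
  induction k with
  | zero => intro h x y z hxy hyz; cases hxy; simpa using hyz
  | succ n ih =>
    intro h x y z hxy hyz
    obtain ⟨w, hw, hrest⟩ := hxy
    rw [show n + 1 + h = n + h + 1 from by omega]
    show StepN r (n + h + 1) x z
    exact ⟨w, hw, ih hrest hyz⟩

lemma StepN.factor {X : Type*} {r : X → X → Prop}
    (hdet : ∀ x y y', r x y → r x y' → y = y')
    (F : Set X) (hfinal : ∀ z ∈ F, ∀ w, ¬ r z w) :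
    ∀ {k h : ℕ} {y x m : X}, StepN r k y x → StepN r h y m → m ∈ F →
      ∃ h', h = k + h' ∧ StepN r h' x m := by
  intro k
  induction k with
  | zero => intro h y x m hk hh hm; cases hk; exact ⟨h, by omega, hh⟩
  | succ n ih =>
    intro h y x m hk hh hm
    obtain ⟨z, hz, hrest⟩ := hk
    cases h with
    | zero => cases hh; exact absurd hz (hfinal _ hm _)
    | succ h'' =>
      obtain ⟨z', hz', hrest'⟩ := hh
      cases hdet _ _ _ hz hz'
      obtain ⟨h', rfl, hs⟩ := ih hrest hrest' hm
      exact ⟨h', by omega, hs⟩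

/-- In a deterministic transition system (final and stuck states being disjoint
classes of normal forms), if `Q'` is cancellative with respect to a common
number of initial steps, `y₁ →^k x₁`, `y₂ →^k x₂` and `y₁ ≼_{Q'} y₂`, then
`x₁ ≼_{Q'} x₂`. -/
theorem refines_after_common_steps {X : Type*} (r : X → X → Prop)
    (F S : Set X)
    (hdet : ∀ x y y', r x y → r x y' → y = y')
    (hfinal : ∀ z ∈ F, ∀ w, ¬ r z w)
    (hstuck : ∀ z ∈ S, ∀ w, ¬ r z w)
    (hdisj : ∀ z, ¬(z ∈ F ∧ z ∈ S))
    (Q' : ℕ → ℕ → Prop)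
    (hcancel : ∀ k₀ k₁ k₂, Q' (k₀ + k₁) (k₀ + k₂) → Q' k₁ k₂)
    (x₁ x₂ y₁ y₂ : X) (k : ℕ)
    (h1 : StepN r k y₁ x₁) (h2 : StepN r k y₂ x₂)
    (hy : Refines r F Q' y₁ y₂) :
    Refines r F Q' x₁ x₂ := by
  intro k₁ n₁ hstep hn₁
  obtain ⟨h, m, hQ, hsm, hmF⟩ := hy (k + k₁) n₁ (StepN.trans h1 hstep) hn₁
  obtain ⟨h', rfl, hs⟩ := StepN.factor hdet F hfinal h2 hsm hmF
  exact ⟨h', m, hcancel k k₁ h' hQ, hs, hmF⟩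
end

section
/- Let (X, →) be a transition system and let ≼_Q be state refinement up to a preorder Q on ℕ. Suppose R is a binary relation on X such that x R y implies x ≼_Q y. Let Q', Q'' be preorders on ℕ with Q' ∘ Q ∘ Q'' ⊆ Q. Then if x (≼_{Q'} ∘ R ∘ ≼_{Q''}) y, we have x ≼_Q y. -/
/-- If `R` implies refinement up to `Q`, and `Q' ∘ Q ∘ Q'' ⊆ Q` with `Q'`,
`Q''` preorders, then the relational composite `≼_{Q'} ∘ R ∘ ≼_{Q''}` also
implies refinement up to `Q`. -/
theorem composite_implies_refinement {X : Type*} (r : X → X → Prop)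
    (F : Set X) (Q Q' Q'' : ℕ → ℕ → Prop)
    (hQrefl : Reflexive Q) (hQtrans : Transitive Q)
    (hQ'refl : Reflexive Q') (hQ'trans : Transitive Q')
    (hQ''refl : Reflexive Q'') (hQ''trans : Transitive Q'')
    (hcomp : ∀ a d, (∃ b c, Q' a b ∧ Q b c ∧ Q'' c d) → Q a d)
    (R : X → X → Prop)
    (hR : ∀ x y, R x y → Refines r F Q x y)
    (x y : X)
    (hxy : ∃ u v, Refines r F Q' x u ∧ R u v ∧ Refines r F Q'' v y) :
    Refines r F Q x y := by
  obtain ⟨u, v, hxu, huv, hvy⟩ := hxy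
  intro k n hk hn
  obtain ⟨h1, m1, hq1, hs1, hm1⟩ := hxu k n hk hn
  obtain ⟨h2, m2, hq2, hs2, hm2⟩ := hR u v huv h1 m1 hs1 hm1
  obtain ⟨h3, m3, hq3, hs3, hm3⟩ := hvy h2 m2 hs2 hm2
  exact ⟨h3, m3, hcomp k h3 ⟨h1, h2, hq1, hq2, hq3⟩, hs3, hm3⟩
end
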